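/- For positive integers n ≥ r ≥ 1 and parameters y, z, q with denominators nonzero: ∑_{i=r}^n [n choose i]_q [i choose r]_q (-1)^{i-1} q^{binom(i+1,2) - in} (y;q)_i/(yz;q)_i = y^{n-r} (-1)^{r-1} q^{-binom(r,2)} · (q;q)_n (y;q)_r (z;q)_{n-r} / ((yz;q)_n (q;q)_r (q;q)_{n-r}). -/

import Mathlib

noncomputable def qPoch (q a : ℝ) (n : ℕ) : ℝ := ∏ j ∈ Finset.range n, (1 - a * q ^ j)

noncomputable def qBinom (q : ℝ) (n r : ℕ) : ℝ :=
  if r ≤ n then qPoch q q n / (qPoch q q r * qPoch q q (n - r)) else 0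

/-!
Write `i = r + j` and `n = r + m`. The identity `[n, i] [i, r] = [n, r] [n - r, i - r]` and the
splittings `(y;q)_{r+j} = (y;q)_r (y q^r;q)_j`, `(yz;q)_n = (yz;q)_{r+j} (yz q^{r+j};q)_{m-j}` turn
the left-hand side into a constant multiple of the terminating `q`-Chu–Vandermonde sum
`∑_j [m, j] (-1)^j q^(j choose 2) q^((1-m) j) (a;q)_j (b q^j;q)_{m-j} = ∏_{k<m} (a - b q^k)`
with `a = y q^r`, `b = y z q^r`. That identity follows by induction on `m` from the two
`q`-Pascal rules, proved simultaneously with a companion identity for the same sum with `q^(1-m)`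
replaced by `q^(2-m)`.
-/

open Finset

section QPochhammer

variable (q : ℝ)

@[simp]
lemma qPoch_zero (a : ℝ) : qPoch q a 0 = 1 := rfl

lemma qPoch_succ (a : ℝ) (n : ℕ) : qPoch q a (n + 1) = qPoch q a n * (1 - a * q ^ n) :=
  prod_range_succ _ _

lemma qPoch_add (a : ℝ) (m n : ℕ) :
    qPoch q a (m + n) = qPoch q a m * qPoch q (a * q ^ m) n := by
  unfold qPoch
  rw [prod_range_add]
  congr 1
  refine prod_congr rfl fun k _ => ?_
  ring

lemma qPoch_mul_prod_Ico (a : ℝ) {j m : ℕ} (hjm : j ≤ m) :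
    qPoch q a j * ∏ k ∈ Ico j m, (1 - a * q ^ k) = qPoch q a m := by
  unfold qPoch
  rw [range_eq_Ico, range_eq_Ico, prod_Ico_consecutive _ (Nat.zero_le j) hjm]

lemma qPoch_ne_zero {a : ℝ} (ha : ∀ k, 1 - a * q ^ k ≠ 0) (n : ℕ) : qPoch q a n ≠ 0 :=
  prod_ne_zero_iff.mpr fun k _ => ha k

variable {q} (hq1 : ∀ j : ℕ, 1 ≤ j → 1 - q ^ j ≠ 0)
include hq1

lemma one_sub_mul_pow_ne_zero (k : ℕ) : 1 - q * q ^ k ≠ 0 := by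
  simpa [pow_succ'] using hq1 (k + 1) k.succ_pos

lemma qPoch_self_ne_zero (n : ℕ) : qPoch q q n ≠ 0 :=
  qPoch_ne_zero q (one_sub_mul_pow_ne_zero hq1) n

end QPochhammer

section QBinomial

lemma qBinom_of_le (q : ℝ) {n r : ℕ} (h : r ≤ n) :
    qBinom q n r = qPoch q q n / (qPoch q q r * qPoch q q (n - r)) := if_pos h

lemma qBinom_of_lt (q : ℝ) {n r : ℕ} (h : n < r) : qBinom q n r = 0 := if_neg h.not_ge

variable {q : ℝ} (hq1 : ∀ j : ℕ, 1 ≤ j → 1 - q ^ j ≠ 0)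
include hq1

lemma qBinom_self (n : ℕ) : qBinom q n n = 1 := by
  rw [qBinom_of_le q le_rfl, Nat.sub_self, qPoch_zero, mul_one, div_self (qPoch_self_ne_zero hq1 n)]

lemma qBinom_zero_right (n : ℕ) : qBinom q n 0 = 1 := by
  rw [qBinom_of_le q n.zero_le, Nat.sub_zero, qPoch_zero, one_mul,
    div_self (qPoch_self_ne_zero hq1 n)]

lemma qBinom_mul {n k s : ℕ} (hkn : k ≤ n) (hsk : s ≤ k) :
    qBinom q n k * qBinom q k s = qBinom q n s * qBinom q (n - s) (k - s) := by
  have h := qPoch_self_ne_zero hq1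
  rw [qBinom_of_le q hkn, qBinom_of_le q hsk, qBinom_of_le q (hsk.trans hkn),
    qBinom_of_le q (Nat.sub_le_sub_right hkn s), Nat.sub_sub_sub_cancel_right hsk]
  have hk := h k
  have hns := h (n - s)
  field_simp

lemma qBinom_succ_succ (m j : ℕ) :
    qBinom q (m + 1) (j + 1) = q ^ (j + 1) * qBinom q m (j + 1) + qBinom q m j ∧
      qBinom q (m + 1) (j + 1) = qBinom q m (j + 1) + q ^ (m - j) * qBinom q m j := by
  rcases lt_trichotomy j m with hjm | rfl | hmj
  · obtain ⟨d, rfl⟩ := Nat.exists_eq_add_of_lt hjm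
    have h := qPoch_self_ne_zero hq1
    have hj := one_sub_mul_pow_ne_zero hq1 j
    have hd := one_sub_mul_pow_ne_zero hq1 d
    simp only [qBinom_of_le q (by omega : j + 1 ≤ j + d + 1 + 1),
      qBinom_of_le q (by omega : j + 1 ≤ j + d + 1), qBinom_of_le q (by omega : j ≤ j + d + 1),
      show j + d + 1 + 1 - (j + 1) = d + 1 by omega, show j + d + 1 - (j + 1) = d by omega,
      show j + d + 1 - j = d + 1 by omega, qPoch_succ q q d, qPoch_succ q q j,
      qPoch_succ q q (j + d + 1)]
    constructor <;> field_simp <;> ring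
  · simp [qBinom_self hq1, qBinom_of_lt q (Nat.lt_succ_self j)]
  · simp [qBinom_of_lt q hmj, qBinom_of_lt q (Nat.lt_succ_of_lt hmj),
      qBinom_of_lt q (by omega : m + 1 < j + 1)]

end QBinomial

section ChuVandermonde

noncomputable def chuVandermondeTerm (q a b x : ℝ) (m j : ℕ) : ℝ :=
  qBinom q m j * ((-1) ^ j * q ^ j.choose 2 * x ^ j * qPoch q a j *
    ∏ k ∈ Ico j m, (1 - b * q ^ k))

/-- At `x = q ^ (1 - m)` this is `(b;q)_m · ₂φ₁(q⁻ᵐ, a; b; q, q)` with its denominators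
cleared, so that it makes sense for every `b`. -/
noncomputable def chuVandermondeSum (q a b x : ℝ) (m : ℕ) : ℝ :=
  ∑ j ∈ range (m + 1), chuVandermondeTerm q a b x m j

lemma chuVandermondeSum_zero (q a b x : ℝ) : chuVandermondeSum q a b x 0 = 1 := by
  simp [chuVandermondeSum, chuVandermondeTerm, qBinom]

lemma prod_Ico_succ_succ (q b : ℝ) (j m : ℕ) :
    ∏ k ∈ Ico (j + 1) (m + 1), (1 - b * q ^ k) = ∏ k ∈ Ico j m, (1 - b * q * q ^ k) := by
  rw [← prod_Ico_add' (fun k => 1 - b * q ^ k)]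
  refine prod_congr rfl fun k _ => ?_
  ring

lemma chuVandermondeTerm_succ_self (q a b x : ℝ) (m : ℕ) :
    chuVandermondeTerm q a b x m (m + 1) = 0 := by
  simp [chuVandermondeTerm, qBinom_of_lt q m.lt_succ_self]

lemma qBinom_mul_prod_Ico_succ (q : ℝ) (f : ℕ → ℝ) {m j : ℕ} (hjm : j ≤ m) :
    qBinom q m (j + 1) * ∏ k ∈ Ico (j + 1) (m + 1), f k =
      qBinom q m (j + 1) * (∏ k ∈ Ico (j + 1) m, f k) * f m := by
  rcases hjm.lt_or_eq with hjm | rfl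
  · rw [prod_Ico_succ_top hjm, mul_assoc]
  · simp [qBinom_of_lt q j.lt_succ_self]

lemma sum_chuVandermondeTerm_succ_add_zero (q a b x : ℝ) (m : ℕ) :
    ∑ j ∈ range (m + 1), chuVandermondeTerm q a b x m (j + 1) + chuVandermondeTerm q a b x m 0 =
      chuVandermondeSum q a b x m := by
  rw [← sum_range_succ', sum_range_succ, chuVandermondeTerm_succ_self, add_zero,
    chuVandermondeSum]

variable {q : ℝ} (hq1 : ∀ j : ℕ, 1 ≤ j → 1 - q ^ j ≠ 0)
include hq1

lemma chuVandermondeTerm_succ_zero (a b x x' : ℝ) (m : ℕ) :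
    chuVandermondeTerm q a b x (m + 1) 0 =
      (1 - b * q ^ m) * chuVandermondeTerm q a b x' m 0 := by
  simp only [chuVandermondeTerm, qBinom_zero_right hq1, prod_Ico_succ_top m.zero_le]
  ring

lemma chuVandermondeTerm_succ_succ (a b x : ℝ) {m j : ℕ} (hjm : j ≤ m) :
    chuVandermondeTerm q a b x (m + 1) (j + 1) =
      (1 - b * q ^ m) * chuVandermondeTerm q a b (q * x) m (j + 1) -
        x * chuVandermondeTerm q a (b * q) (q * x) m j +
          a * x * chuVandermondeTerm q a (b * q) (q * (q * x)) m j := by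
  have htop := qBinom_mul_prod_Ico_succ q (fun k => 1 - b * q ^ k) hjm
  have hshift := prod_Ico_succ_succ q b j m
  unfold chuVandermondeTerm
  rw [(qBinom_succ_succ hq1 m j).1, Nat.choose_succ_succ', Nat.choose_one_right, qPoch_succ]
  linear_combination (-1) ^ (j + 1) * q ^ (j + j.choose 2) * x ^ (j + 1) *
    (qPoch q a j * (1 - a * q ^ j)) * (q ^ (j + 1) * htop + qBinom q m j * hshift)

lemma chuVandermondeTerm_succ_succ' (a b x : ℝ) {m j : ℕ} (hjm : j ≤ m) :
    chuVandermondeTerm q a b x (m + 1) (j + 1) =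
      (1 - b * q ^ m) * chuVandermondeTerm q a b x m (j + 1) -
        x * q ^ m * chuVandermondeTerm q a (b * q) x m j +
          a * x * q ^ m * chuVandermondeTerm q a (b * q) (q * x) m j := by
  have htop := qBinom_mul_prod_Ico_succ q (fun k => 1 - b * q ^ k) hjm
  have hshift := prod_Ico_succ_succ q b j m
  have hpow := pow_sub_mul_pow q hjm
  unfold chuVandermondeTerm
  rw [(qBinom_succ_succ hq1 m j).2, Nat.choose_succ_succ', Nat.choose_one_right, qPoch_succ]
  linear_combination (-1) ^ (j + 1) * q ^ j.choose 2 * x ^ (j + 1) *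
    (qPoch q a j * (1 - a * q ^ j)) * (q ^ j * htop + q ^ (m - j) * qBinom q m j * q ^ j * hshift +
      qBinom q m j * (∏ k ∈ Ico j m, (1 - b * q * q ^ k)) * hpow)

lemma chuVandermondeSum_succ (a b x : ℝ) (m : ℕ) :
    chuVandermondeSum q a b x (m + 1) =
      (1 - b * q ^ m) * chuVandermondeSum q a b (q * x) m -
        x * chuVandermondeSum q a (b * q) (q * x) m +
          a * x * chuVandermondeSum q a (b * q) (q * (q * x)) m := by
  have hs := sum_chuVandermondeTerm_succ_add_zero q a b (q * x) m
  unfold chuVandermondeSum at hs ⊢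
  rw [sum_range_succ', sum_congr rfl fun j hj =>
      chuVandermondeTerm_succ_succ hq1 a b x (Nat.lt_succ_iff.mp (mem_range.mp hj)),
    chuVandermondeTerm_succ_zero hq1 a b x (q * x)]
  simp only [sum_add_distrib, sum_sub_distrib, ← mul_sum]
  linear_combination (1 - b * q ^ m) * hs

lemma chuVandermondeSum_succ' (a b x : ℝ) (m : ℕ) :
    chuVandermondeSum q a b x (m + 1) =
      (1 - b * q ^ m) * chuVandermondeSum q a b x m -
        x * q ^ m * chuVandermondeSum q a (b * q) x m +
          a * x * q ^ m * chuVandermondeSum q a (b * q) (q * x) m := by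
  have hs := sum_chuVandermondeTerm_succ_add_zero q a b x m
  unfold chuVandermondeSum at hs ⊢
  rw [sum_range_succ', sum_congr rfl fun j hj =>
      chuVandermondeTerm_succ_succ' hq1 a b x (Nat.lt_succ_iff.mp (mem_range.mp hj)),
    chuVandermondeTerm_succ_zero hq1 a b x x]
  simp only [sum_add_distrib, sum_sub_distrib, ← mul_sum]
  linear_combination (1 - b * q ^ m) * hs

omit hq1 in
lemma prod_range_mul_sub_mul (c a b : ℝ) (m : ℕ) :
    ∏ k ∈ range m, (c * a - c * b * q ^ k) = c ^ m * ∏ k ∈ range m, (a - b * q ^ k) := by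
  rw [show c ^ m = ∏ _k ∈ range m, c by simp, ← prod_mul_distrib]
  exact prod_congr rfl fun k _ => by ring

/-- The companion identity at `q * x` is what makes the induction on `m` close. -/
lemma chuVandermondeSum_eq_prod_and (hq : q ≠ 0) (m : ℕ) :
    ∀ a b x, x * q ^ m = q →
      chuVandermondeSum q a b x m = ∏ k ∈ range m, (a - b * q ^ k) ∧
        a * chuVandermondeSum q a b (q * x) m =
          (a - 1) * ∏ k ∈ range m, (q * a - b * q ^ k) + ∏ k ∈ range m, (a - b * q ^ k) := by
  induction m with
  | zero => simp [chuVandermondeSum_zero]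
  | succ m ih =>
    intro a b x hx
    have hxq : x * q ^ m = 1 :=
      mul_right_cancel₀ hq (by rw [mul_assoc, ← pow_succ, hx, one_mul])
    have hqx : q * x * q ^ m = q := by rw [mul_assoc, hxq, mul_one]
    obtain ⟨hP, -⟩ := ih a b (q * x) hqx
    obtain ⟨hP₁, hP₂⟩ := ih a (b * q) (q * x) hqx
    have hscale : ∏ k ∈ range m, (q * a - b * q * q ^ k) =
        q ^ m * ∏ k ∈ range m, (a - b * q ^ k) := by
      rw [← prod_range_mul_sub_mul]
      exact prod_congr rfl fun k _ => by ring
    have hshift : ∏ k ∈ range m, (q * a - b * q ^ (k + 1)) =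
        q ^ m * ∏ k ∈ range m, (a - b * q ^ k) := by
      rw [← prod_range_mul_sub_mul]
      exact prod_congr rfl fun k _ => by ring
    rw [hscale] at hP₂
    constructor
    · rw [chuVandermondeSum_succ hq1, hP, hP₁, prod_range_succ]
      linear_combination x * hP₂ + (a - 1) * (∏ k ∈ range m, (a - b * q ^ k)) * hxq
    · rw [chuVandermondeSum_succ' hq1, hP, hP₁, prod_range_succ (fun k => a - b * q ^ k),
        prod_range_succ' (fun k => q * a - b * q ^ k), hshift]
      linear_combination a * q * hP₂ + a * (a * chuVandermondeSum q a (b * q) (q * (q * x)) m -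
        ∏ k ∈ range m, (a - b * q * q ^ k)) * hqx

lemma chuVandermondeSum_eq_prod (hq : q ≠ 0) {x : ℝ} (a b : ℝ) {m : ℕ}
    (hx : x * q ^ m = q) :
    chuVandermondeSum q a b x m = ∏ k ∈ range m, (a - b * q ^ k) :=
  (chuVandermondeSum_eq_prod_and hq1 hq m a b x hx).1

end ChuVandermonde

lemma qPoch_div_qPoch_add (q a c : ℝ) (hc : ∀ k, 1 - c * q ^ k ≠ 0) {r j m : ℕ}
    (hjm : j ≤ m) :
    qPoch q a (r + j) / qPoch q c (r + j) =
      qPoch q a r / (qPoch q c r * qPoch q (c * q ^ r) m) *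
        (qPoch q (a * q ^ r) j * ∏ k ∈ Ico j m, (1 - c * q ^ r * q ^ k)) := by
  have hcr : ∀ k, 1 - c * q ^ r * q ^ k ≠ 0 := fun k => by
    simpa [pow_add, mul_assoc] using hc (r + k)
  have h₁ := qPoch_ne_zero q hc r
  have h₂ := qPoch_ne_zero q hcr j
  have h₃ : ∏ k ∈ Ico j m, (1 - c * q ^ r * q ^ k) ≠ 0 :=
    prod_ne_zero_iff.mpr fun k _ => hcr k
  rw [qPoch_add, qPoch_add, ← qPoch_mul_prod_Ico q (c * q ^ r) hjm]
  generalize qPoch q (c * q ^ r) j = B at h₂ ⊢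
  generalize ∏ k ∈ Ico j m, (1 - c * q ^ r * q ^ k) = P at h₃ ⊢
  field_simp

lemma choose_two_exponent (r j m : ℕ) :
    ((((r + j) * (r + j + 1) / 2 : ℕ) : ℤ) - ((r + j : ℕ) : ℤ) * ((r + m : ℕ) : ℤ)) =
      (-(r.choose 2 : ℤ) - r * m) + (j.choose 2 : ℤ) + (1 - m) * j := by
  rw [show (r + j) * (r + j + 1) / 2 = (r + j + 1).choose 2 by
    rw [Nat.choose_two_right, Nat.add_sub_cancel, mul_comm]]
  qify
  simp only [Nat.cast_choose_two]
  push_cast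
  ring

lemma summand_eq_mul_chuVandermondeTerm {q : ℝ} (hq : q ≠ 0)
    (hq1 : ∀ j : ℕ, 1 ≤ j → 1 - q ^ j ≠ 0) (y z : ℝ) (hyz : ∀ k, 1 - y * z * q ^ k ≠ 0)
    {r m j : ℕ} (hr : 1 ≤ r) (hjm : j ≤ m) :
    qBinom q (r + m) (r + j) * qBinom q (r + j) r * (-1) ^ (r + j - 1) *
        q ^ ((((r + j) * (r + j + 1) / 2 : ℕ) : ℤ) - ((r + j : ℕ) : ℤ) * ((r + m : ℕ) : ℤ)) *
        (qPoch q y (r + j) / qPoch q (y * z) (r + j)) =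
      qBinom q (r + m) r * (-1) ^ (r - 1) * q ^ (-(r.choose 2 : ℤ) - r * m) *
          (qPoch q y r / (qPoch q (y * z) r * qPoch q (y * z * q ^ r) m)) *
        chuVandermondeTerm q (y * q ^ r) (y * z * q ^ r) (q ^ ((1 : ℤ) - m)) m j := by
  rw [qBinom_mul hq1 (by omega) (by omega), Nat.add_sub_cancel_left, Nat.add_sub_cancel_left,
    show r + j - 1 = r - 1 + j by omega, pow_add, choose_two_exponent, zpow_add₀ hq, zpow_add₀ hq,
    zpow_natCast, zpow_mul, zpow_natCast, qPoch_div_qPoch_add q y (y * z) hyz hjm,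
    chuVandermondeTerm]
  ring

/-- Corollary 3.4. -/
theorem cor34 (q y z : ℝ) (n r : ℕ) (hr : 1 ≤ r) (hrn : r ≤ n) (hq : q ≠ 0)
    (hden1 : ∀ j : ℕ, 1 ≤ j → 1 - q ^ j ≠ 0)
    (hden2 : ∀ j : ℕ, 0 ≤ j → 1 - y * z * q ^ j ≠ 0) :
    (∑ i ∈ Finset.Icc r n,
        qBinom q n i * qBinom q i r * (-1) ^ (i - 1) *
          q ^ (((i * (i + 1) / 2 : ℕ) : ℤ) - (i : ℤ) * n) * (qPoch q y i / qPoch q (y * z) i)) =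
      y ^ (n - r) * (-1) ^ (r - 1) * q ^ (-((r * (r - 1) / 2 : ℕ) : ℤ)) *
        (qPoch q q n * qPoch q y r * qPoch q z (n - r) /
          (qPoch q (y * z) n * qPoch q q r * qPoch q q (n - r))) := by
  obtain ⟨m, rfl⟩ := Nat.exists_eq_add_of_le hrn
  have hyz : ∀ k, 1 - y * z * q ^ k ≠ 0 := fun k => hden2 k k.zero_le
  have hx : q ^ ((1 : ℤ) - m) * q ^ m = q := by
    rw [← zpow_natCast, ← zpow_add₀ hq, sub_add_cancel, zpow_one]
  have hprod : ∏ k ∈ range m, (y * q ^ r - y * z * q ^ r * q ^ k) =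
      (y * q ^ r) ^ m * qPoch q z m := by
    rw [qPoch, ← prod_range_mul_sub_mul]
    exact prod_congr rfl fun k _ => by ring
  rw [← Ico_add_one_right_eq_Icc, sum_Ico_eq_sum_range, show r + m + 1 - r = m + 1 by omega,
    sum_congr rfl fun j hj => summand_eq_mul_chuVandermondeTerm hq hden1 y z hyz hr
      (Nat.lt_succ_iff.mp (mem_range.mp hj)), ← mul_sum, ← chuVandermondeSum,
    chuVandermondeSum_eq_prod hden1 hq _ _ hx, hprod, qBinom_of_le q hrn, Nat.add_sub_cancel_left,
    qPoch_add q (y * z) r m, ← Nat.choose_two_right, zpow_sub₀ hq, zpow_neg, zpow_natCast,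
    ← Nat.cast_mul, zpow_natCast, mul_pow, ← pow_mul]
  have := qPoch_self_ne_zero hden1 r
  have := qPoch_self_ne_zero hden1 m
  have := qPoch_ne_zero q hyz r
  field_simp
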